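/- arXiv:2109.02849 — 4 statements merged into one kernel-verified Lean document; each statement's English description precedes it below -/
import Mathlib

section
/- Fix ρ, κ ∈ (0,1) with ρ + κ/2 < 1 and κ + ρ/2 < 1, and Υ, Υ' ≥ 1. For each integer S ≥ 1 set R = ⌈S^ρ⌉, C = ⌈S^κ⌉, and let Z_{ij} (1 ≤ i ≤ R, 1 ≤ j ≤ C) be independent Bernoulli random variables with success probabilities p_{ij} ∈ [0,1] satisfying S/(Υ'·RC) ≤ p_{ij} ≤ Υ·S/(RC). Then lim_{S→∞} P( ‖Z‖₂ ≤ (Υ+1)·S/√(RC) ) = 1. -/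
/-!
By Schur's test, the spectral norm of a nonnegative matrix is at most the geometric mean of its
largest row sum and its largest column sum. A row sum of `Z` is a sum of `C` independent Bernoulli
variables of total mean at most `ΥS/R`, so the Chernoff bound with parameter `t = 1/(2Υ)` shows
that it reaches `(Υ+1)S/R` with probability at most `exp(-S/(4ΥR))`; likewise for the columns.
A union bound leaves a failure probability of at most `R exp(-S/(4ΥR)) + C exp(-S/(4ΥC))`, which
tends to `0` because `R ≤ 2S^ρ` and `C ≤ 2S^κ` with `ρ, κ < 1`.
-/

open MeasureTheory ProbabilityTheory Filter

/-- The ℓ²→ℓ² operator (spectral) norm of a real matrix. -/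
noncomputable def l2OpNorm {m n : ℕ} (A : Matrix (Fin m) (Fin n) ℝ) : ℝ :=
  ‖LinearMap.toContinuousLinearMap (Matrix.toEuclideanLin A)‖

open Real Finset Topology

theorem l2OpNorm_le_sqrt_mul_of_sum_le {m n : ℕ} {A : Matrix (Fin m) (Fin n) ℝ}
    (hA : ∀ i j, 0 ≤ A i j) {r c : ℝ} (hr : 0 ≤ r)
    (hrow : ∀ i, ∑ j, A i j ≤ r) (hcol : ∀ j, ∑ i, A i j ≤ c) :
    l2OpNorm A ≤ √(r * c) := by
  refine ContinuousLinearMap.opNorm_le_bound _ (sqrt_nonneg _) fun v => ?_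
  -- Cauchy–Schwarz with weights `A i j` on each row
  have hrow_sq (i : Fin m) : (∑ j, A i j * v j) ^ 2 ≤ r * ∑ j, A i j * v j ^ 2 := by
    have hweights (j : Fin n) : 0 ≤ A i j * v j ^ 2 := mul_nonneg (hA i j) (sq_nonneg _)
    refine (sum_sq_le_sum_mul_sum_of_sq_le_mul _ (fun j _ => hA i j) (fun j _ => hweights j)
      fun j _ => le_of_eq (by ring)).trans ?_
    exact mul_le_mul_of_nonneg_right (hrow i) (sum_nonneg fun j _ => hweights j)
  have hsq : ∑ i, (∑ j, A i j * v j) ^ 2 ≤ r * c * ∑ j, v j ^ 2 :=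
    calc ∑ i, (∑ j, A i j * v j) ^ 2 ≤ ∑ i, r * ∑ j, A i j * v j ^ 2 :=
          sum_le_sum fun i _ => hrow_sq i
      _ = r * ∑ j, (∑ i, A i j) * v j ^ 2 := by
        rw [← mul_sum, sum_comm]; simp_rw [sum_mul]
      _ ≤ r * ∑ j, c * v j ^ 2 := by
        gcongr with j; exact hcol j
      _ = r * c * ∑ j, v j ^ 2 := by rw [← mul_sum, mul_assoc]
  rw [LinearMap.coe_toContinuousLinearMap', EuclideanSpace.norm_eq, EuclideanSpace.norm_eq,
    ← sqrt_mul' _ (sum_nonneg fun j _ => sq_nonneg _)]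
  refine sqrt_le_sqrt ?_
  simpa [Matrix.toLpLin_apply, Matrix.mulVec, dotProduct] using hsq

theorem tendsto_mul_exp_neg_mul_rpow {b a : ℝ} (hb : 0 < b) (ha : 0 < a) :
    Tendsto (fun x : ℝ => x * exp (-(b * x ^ a))) atTop (𝓝 0) := by
  refine ((tendsto_rpow_mul_exp_neg_mul_atTop_nhds_zero a⁻¹ b hb).comp
    (tendsto_rpow_atTop ha)).congr' ?_
  filter_upwards [eventually_ge_atTop 0] with x hx
  simp [rpow_rpow_inv hx ha.ne']

theorem tendsto_mul_exp_neg_div_of_le_rpow {a K c : ℝ} (ha : a < 1) (hK : 0 < K) (hc : 0 < c)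
    {n : ℕ → ℝ} (hn : ∀ᶠ S in atTop, 0 < n S ∧ n S ≤ K * (S : ℝ) ^ a) :
    Tendsto (fun S : ℕ => n S * exp (-(S / n S / c))) atTop (𝓝 0) := by
  have hlim : Tendsto (fun S : ℕ => K * ((S : ℝ) * exp (-((K * c)⁻¹ * (S : ℝ) ^ (1 - a)))))
      atTop (𝓝 0) := by
    simpa using ((tendsto_mul_exp_neg_mul_rpow (by positivity) (by linarith)).comp
      tendsto_natCast_atTop_atTop).const_mul K
  refine squeeze_zero' (hn.mono fun S hS => by have := hS.1; positivity) ?_ hlim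
  filter_upwards [hn, eventually_ge_atTop 1] with S ⟨hn0, hnS⟩ hS
  have hS1 : (1 : ℝ) ≤ S := by exact_mod_cast hS
  have hS0 : (0 : ℝ) < S := by linarith
  have hexp : (K * c)⁻¹ * (S : ℝ) ^ (1 - a) ≤ S / n S / c := by
    calc (K * c)⁻¹ * (S : ℝ) ^ (1 - a) = S / (K * (S : ℝ) ^ a) / c := by
          rw [rpow_sub hS0, rpow_one]; field_simp
      _ ≤ S / n S / c := by gcongr
  calc n S * exp (-(S / n S / c)) ≤ K * S * exp (-((K * c)⁻¹ * (S : ℝ) ^ (1 - a))) := by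
        gcongr
        exact hnS.trans (by gcongr; exact rpow_le_self_of_one_le hS1 ha.le)
    _ = _ := by ring

theorem eventually_natCeil_rpow_le {a : ℝ} (ha : 0 ≤ a) :
    ∀ᶠ S : ℕ in atTop, 0 < (⌈(S : ℝ) ^ a⌉₊ : ℝ) ∧ (⌈(S : ℝ) ^ a⌉₊ : ℝ) ≤ 2 * (S : ℝ) ^ a := by
  filter_upwards [eventually_ge_atTop 1] with S hS
  have h1 : 1 ≤ (S : ℝ) ^ a := one_le_rpow (by exact_mod_cast hS) ha
  exact ⟨by exact_mod_cast Nat.ceil_pos.mpr (by linarith), Nat.ceil_le_two_mul (by linarith)⟩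

section

variable {Ω : Type*} [MeasurableSpace Ω] {P : Measure Ω} [IsProbabilityMeasure P]

theorem mgf_eq_of_eq_zero_or_eq_one {X : Ω → ℝ} (hX : ∀ ω, X ω = 0 ∨ X ω = 1)
    (hmeas : Measurable X) (t : ℝ) :
    mgf X P t = 1 + (exp t - 1) * P.real {ω | X ω = 1} := by
  have hind : X = {ω | X ω = 1}.indicator 1 := by
    ext ω; rcases hX ω with h | h <;> simp [h]
  have hexp : (fun ω => exp (t * X ω)) = fun ω => 1 + (exp t - 1) * X ω := by
    ext ω; rcases hX ω with h | h <;> simp [h]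
  have hset : MeasurableSet {ω | X ω = 1} := hmeas (measurableSet_singleton 1)
  have hint : Integrable X P := by
    rw [hind]; exact (integrable_const 1).indicator hset
  have hmean : ∫ ω, X ω ∂P = P.real {ω | X ω = 1} := by
    conv_lhs => rw [hind]
    exact integral_indicator_one hset
  rw [mgf, hexp, integral_add (integrable_const 1) (hint.const_mul _), integral_const_mul, hmean]
  simp

theorem mgf_le_exp_of_eq_zero_or_eq_one {X : Ω → ℝ} (hX : ∀ ω, X ω = 0 ∨ X ω = 1)
    (hmeas : Measurable X) (t : ℝ) :
    mgf X P t ≤ exp ((exp t - 1) * P.real {ω | X ω = 1}) := by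
  rw [mgf_eq_of_eq_zero_or_eq_one hX hmeas, add_comm]
  exact add_one_le_exp _

theorem measure_sum_ge_le_of_iIndepFun_of_eq_zero_or_eq_one {ι : Type*} {W : ι → Ω → ℝ}
    (hW : ∀ q ω, W q ω = 0 ∨ W q ω = 1) (hmeas : ∀ q, Measurable (W q))
    (hindep : iIndepFun W P) (s : Finset ι) {μ : ℝ}
    (hμ : ∑ q ∈ s, P.real {ω | W q ω = 1} ≤ μ) {t : ℝ} (ht : 0 ≤ t) (b : ℝ) :
    P.real {ω | b ≤ ∑ q ∈ s, W q ω} ≤ exp (-t * b + (exp t - 1) * μ) := by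
  have hbdd : ∀ᵐ ω ∂P, ‖exp (t * ∑ q ∈ s, W q ω)‖ ≤ exp (t * #s) := by
    refine ae_of_all _ fun ω => ?_
    rw [norm_of_nonneg (exp_nonneg _)]
    gcongr
    calc ∑ q ∈ s, W q ω ≤ ∑ q ∈ s, (1 : ℝ) :=
          sum_le_sum fun q _ => by rcases hW q ω with h | h <;> simp [h]
      _ = #s := by simp
  have hint : Integrable (fun ω => exp (t * ∑ q ∈ s, W q ω)) P :=
    (integrable_const _).mono' (by fun_prop) hbdd
  calc P.real {ω | b ≤ ∑ q ∈ s, W q ω}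
      ≤ exp (-t * b) * mgf (∑ q ∈ s, W q) P t := by
        simpa using measure_ge_le_exp_mul_mgf (X := ∑ q ∈ s, W q) b ht (by simpa using hint)
    _ ≤ exp (-t * b) * ∏ q ∈ s, exp ((exp t - 1) * P.real {ω | W q ω = 1}) := by
        rw [hindep.mgf_sum hmeas]
        gcongr with q hq
        · exact fun q _ => mgf_nonneg
        · exact mgf_le_exp_of_eq_zero_or_eq_one (hW q) (hmeas q) t
    _ ≤ exp (-t * b + (exp t - 1) * μ) := by
        rw [← exp_sum, ← exp_add, ← mul_sum]
        gcongr
        linarith [add_one_le_exp t]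

theorem measure_sum_ge_le_exp_neg_div {ι : Type*} {W : ι → Ω → ℝ}
    (hW : ∀ q ω, W q ω = 0 ∨ W q ω = 1) (hmeas : ∀ q, Measurable (W q))
    (hindep : iIndepFun W P) (s : Finset ι) {Υ m : ℝ} (hΥ : 1 / 2 ≤ Υ) (hm : 0 ≤ m)
    (hμ : ∑ q ∈ s, P.real {ω | W q ω = 1} ≤ Υ * m) :
    P {ω | (Υ + 1) * m ≤ ∑ q ∈ s, W q ω} ≤ ENNReal.ofReal (exp (-(m / (4 * Υ)))) := by
  have hΥ0 : 0 < Υ := by linarith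
  set t := 1 / (2 * Υ)
  have ht : 0 ≤ t := by positivity
  have hexp : exp t - 1 ≤ t + t ^ 2 := by
    have ht1 : |t| ≤ 1 := by rw [abs_of_nonneg ht, div_le_one (by positivity)]; linarith
    linarith [(abs_le.mp (abs_exp_sub_one_sub_id_le ht1)).2]
  rw [ENNReal.le_ofReal_iff_toReal_le (measure_ne_top _ _) (exp_nonneg _)]
  refine (measure_sum_ge_le_of_iIndepFun_of_eq_zero_or_eq_one hW hmeas hindep s hμ ht _).trans ?_
  gcongr
  -- `t = 1/(2Υ)` minimises `-t(Υ+1)m + (t + t²)Υm`, with value `-m/(4Υ)`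
  calc -t * ((Υ + 1) * m) + (exp t - 1) * (Υ * m)
      ≤ -t * ((Υ + 1) * m) + (t + t ^ 2) * (Υ * m) := by gcongr
    _ = -(m / (4 * Υ)) := by simp only [t]; field_simp; ring

theorem one_sub_le_measure_l2OpNorm_le {m n : ℕ} {Z : Ω → Matrix (Fin m) (Fin n) ℝ}
    (hZ : ∀ ω i j, Z ω i j = 0 ∨ Z ω i j = 1) (hmeas : ∀ i j, Measurable fun ω => Z ω i j)
    (hindep : iIndepFun (fun q : Fin m × Fin n => fun ω => Z ω q.1 q.2) P)
    {Υ r c : ℝ} (hΥ : 1 / 2 ≤ Υ) (hr : 0 ≤ r) (hc : 0 ≤ c)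
    (hrow : ∀ i, ∑ j, P.real {ω | Z ω i j = 1} ≤ Υ * r)
    (hcol : ∀ j, ∑ i, P.real {ω | Z ω i j = 1} ≤ Υ * c) :
    1 - ENNReal.ofReal (m * exp (-(r / (4 * Υ))) + n * exp (-(c / (4 * Υ)))) ≤
      P {ω | l2OpNorm (Z ω) ≤ (Υ + 1) * √(r * c)} := by
  set rowBad := fun i => {ω | (Υ + 1) * r ≤ ∑ j, Z ω i j}
  set colBad := fun j => {ω | (Υ + 1) * c ≤ ∑ i, Z ω i j}
  set bad := (⋃ i, rowBad i) ∪ ⋃ j, colBad j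
  have hrowBad (i : Fin m) : P (rowBad i) ≤ ENNReal.ofReal (exp (-(r / (4 * Υ)))) :=
    measure_sum_ge_le_exp_neg_div (fun j ω => hZ ω i j) (fun j => hmeas i j)
      (hindep.precomp (Prod.mk_right_injective i)) univ hΥ hr (hrow i)
  have hcolBad (j : Fin n) : P (colBad j) ≤ ENNReal.ofReal (exp (-(c / (4 * Υ)))) :=
    measure_sum_ge_le_exp_neg_div (fun i ω => hZ ω i j) (fun i => hmeas i j)
      (hindep.precomp (Prod.mk_left_injective j)) univ hΥ hc (hcol j)
  have hbad : P bad ≤ ENNReal.ofReal (m * exp (-(r / (4 * Υ))) + n * exp (-(c / (4 * Υ)))) :=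
    calc P bad ≤ ∑ i, P (rowBad i) + ∑ j, P (colBad j) :=
          (measure_union_le _ _).trans
            (add_le_add (measure_iUnion_fintype_le _ _) (measure_iUnion_fintype_le _ _))
      _ ≤ ∑ _i : Fin m, ENNReal.ofReal (exp (-(r / (4 * Υ))))
            + ∑ _j : Fin n, ENNReal.ofReal (exp (-(c / (4 * Υ)))) := by
          gcongr with i _ j _
          exacts [hrowBad i, hcolBad j]
      _ = _ := by
          simp only [sum_const, card_univ, Fintype.card_fin, nsmul_eq_mul]
          rw [ENNReal.ofReal_add (by positivity) (by positivity),
            ENNReal.ofReal_mul (by positivity), ENNReal.ofReal_mul (by positivity),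
            ENNReal.ofReal_natCast, ENNReal.ofReal_natCast]
  have hgood : badᶜ ⊆ {ω | l2OpNorm (Z ω) ≤ (Υ + 1) * √(r * c)} := by
    intro ω hω
    simp only [bad, Set.compl_union, Set.compl_iUnion, Set.mem_inter_iff, Set.mem_iInter,
      Set.mem_compl_iff, Set.mem_ofPred_eq, not_le, rowBad, colBad] at hω
    have hΥ1 : 0 ≤ Υ + 1 := by linarith
    calc l2OpNorm (Z ω) ≤ √(((Υ + 1) * r) * ((Υ + 1) * c)) :=
          l2OpNorm_le_sqrt_mul_of_sum_le (fun i j => by rcases hZ ω i j with h | h <;> simp [h])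
            (by positivity) (fun i => (hω.1 i).le) (fun j => (hω.2 j).le)
      _ = (Υ + 1) * √(r * c) := by
          rw [show (Υ + 1) * r * ((Υ + 1) * c) = (Υ + 1) ^ 2 * (r * c) by ring,
            sqrt_mul (sq_nonneg _), sqrt_sq hΥ1]
  rw [tsub_le_iff_left]
  calc 1 = P Set.univ := measure_univ.symm
    _ ≤ P bad + P badᶜ := measure_univ_le_add_compl _
    _ ≤ _ := add_le_add hbad (measure_mono hgood)

end

theorem l2OpNorm_whp_bound_general
    (ρ κ : ℝ) (hρ : ρ ∈ Set.Ioo (0 : ℝ) 1) (hκ : κ ∈ Set.Ioo (0 : ℝ) 1)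
    (Υ : ℝ) (hΥ : 1 ≤ Υ)
    (R C : ℕ → ℕ)
    (hR : ∀ S : ℕ, R S = ⌈(S : ℝ) ^ ρ⌉₊) (hC : ∀ S : ℕ, C S = ⌈(S : ℝ) ^ κ⌉₊)
    (p : ∀ S : ℕ, Fin (R S) → Fin (C S) → ℝ)
    (hp0 : ∀ S i j, p S i j ∈ Set.Icc (0 : ℝ) 1)
    (hp2 : ∀ S : ℕ, 1 ≤ S → ∀ i j, p S i j ≤ Υ * S / (R S * C S))
    (Ω : ℕ → Type) (mΩ : ∀ S, MeasurableSpace (Ω S))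
    (P : ∀ S, Measure (Ω S)) (hP : ∀ S, IsProbabilityMeasure (P S))
    (Z : ∀ S : ℕ, Ω S → Matrix (Fin (R S)) (Fin (C S)) ℝ)
    (hZ01 : ∀ S ω i j, Z S ω i j = 0 ∨ Z S ω i j = 1)
    (hZmeas : ∀ S i j, Measurable (fun ω => Z S ω i j))
    (hZindep : ∀ S : ℕ, iIndepFun
      (fun (q : Fin (R S) × Fin (C S)) => fun ω => Z S ω q.1 q.2) (P S))
    (hZbern : ∀ S i j, P S {ω | Z S ω i j = 1} = ENNReal.ofReal (p S i j)) :
    Tendsto (fun S : ℕ =>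
        P S {ω | l2OpNorm (Z S ω) ≤ (Υ + 1) * S / Real.sqrt (R S * C S)})
      atTop (nhds 1) := by
  have hΥ0 : 0 < Υ := by linarith
  have hdecay {N : ℕ → ℕ} {a : ℝ} (ha : a ∈ Set.Ioo (0 : ℝ) 1)
      (hN : ∀ S : ℕ, N S = ⌈(S : ℝ) ^ a⌉₊) :
      Tendsto (fun S : ℕ => (N S : ℝ) * exp (-(S / N S / (4 * Υ)))) atTop (𝓝 0) := by
    simp only [hN]
    exact tendsto_mul_exp_neg_div_of_le_rpow ha.2 two_pos (by positivity)
      (eventually_natCeil_rpow_le ha.1.le)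
  have hlower : Tendsto (fun S : ℕ => 1 - ENNReal.ofReal
      (R S * exp (-(S / R S / (4 * Υ))) + C S * exp (-(S / C S / (4 * Υ))))) atTop (𝓝 1) := by
    simpa using ENNReal.Tendsto.sub tendsto_const_nhds
      (ENNReal.tendsto_ofReal ((hdecay hρ hR).add (hdecay hκ hC))) (.inr ENNReal.ofReal_ne_top)
  refine tendsto_of_tendsto_of_tendsto_of_le_of_le' hlower tendsto_const_nhds ?_
    (.of_forall fun S => prob_le_one)
  filter_upwards [eventually_ge_atTop 1] with S hS
  have hRpos : (0 : ℝ) < R S := by rw [hR]; exact_mod_cast Nat.ceil_pos.mpr (by positivity)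
  have hCpos : (0 : ℝ) < C S := by rw [hC]; exact_mod_cast Nat.ceil_pos.mpr (by positivity)
  have hmean (i j) : (P S).real {ω | Z S ω i j = 1} = p S i j := by
    rw [measureReal_def, hZbern, ENNReal.toReal_ofReal (hp0 S i j).1]
  have hsqrt : (Υ + 1) * S / √(R S * C S) = (Υ + 1) * √(S / R S * (S / C S)) := by
    rw [show (S / R S * (S / C S) : ℝ) = S ^ 2 / (R S * C S) by ring, sqrt_div' _ (by positivity),
      sqrt_sq (by positivity), mul_div_assoc]
  rw [hsqrt]
  refine one_sub_le_measure_l2OpNorm_le (hZ01 S) (hZmeas S) (hZindep S) (by linarith)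
    (by positivity) (by positivity) (fun i => ?_) (fun j => ?_)
  · calc ∑ j, (P S).real {ω | Z S ω i j = 1} ≤ ∑ _j : Fin (C S), Υ * S / (R S * C S) :=
          sum_le_sum fun j _ => (hmean i j).trans_le (hp2 S hS i j)
      _ = Υ * (S / R S) := by
        simp only [sum_const, card_univ, Fintype.card_fin, nsmul_eq_mul]; field_simp
  · calc ∑ i, (P S).real {ω | Z S ω i j = 1} ≤ ∑ _i : Fin (R S), Υ * S / (R S * C S) :=
          sum_le_sum fun i _ => (hmean i j).trans_le (hp2 S hS i j)
      _ = Υ * (S / C S) := by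
        simp only [sum_const, card_univ, Fintype.card_fin, nsmul_eq_mul]; field_simp

/-- **High-probability spectral-norm bound.**  Under the model with
`R = ⌈S^ρ⌉`, `C = ⌈S^κ⌉`, `ρ + κ/2 < 1`, `κ + ρ/2 < 1`, and independent Bernoulli
entries with `S/(Υ'·RC) ≤ p_{ij} ≤ Υ·S/(RC)`, with probability tending to one
`‖Z‖₂ ≤ (Υ+1)·S/√(RC)`. -/
theorem l2OpNorm_whp_bound
    (ρ κ : ℝ) (hρ : ρ ∈ Set.Ioo (0 : ℝ) 1) (hκ : κ ∈ Set.Ioo (0 : ℝ) 1)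
    (hcond1 : ρ + κ / 2 < 1) (hcond2 : κ + ρ / 2 < 1)
    (Υ Υ' : ℝ) (hΥ : 1 ≤ Υ) (hΥ' : 1 ≤ Υ')
    (R C : ℕ → ℕ)
    (hR : ∀ S : ℕ, R S = ⌈(S : ℝ) ^ ρ⌉₊) (hC : ∀ S : ℕ, C S = ⌈(S : ℝ) ^ κ⌉₊)
    (p : ∀ S : ℕ, Fin (R S) → Fin (C S) → ℝ)
    (hp0 : ∀ S i j, p S i j ∈ Set.Icc (0 : ℝ) 1)
    (hp1 : ∀ S : ℕ, 1 ≤ S → ∀ i j, (S : ℝ) / (Υ' * (R S * C S)) ≤ p S i j)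
    (hp2 : ∀ S : ℕ, 1 ≤ S → ∀ i j, p S i j ≤ Υ * S / (R S * C S))
    (Ω : ℕ → Type) (mΩ : ∀ S, MeasurableSpace (Ω S))
    (P : ∀ S, Measure (Ω S)) (hP : ∀ S, IsProbabilityMeasure (P S))
    (Z : ∀ S : ℕ, Ω S → Matrix (Fin (R S)) (Fin (C S)) ℝ)
    (hZ01 : ∀ S ω i j, Z S ω i j = 0 ∨ Z S ω i j = 1)
    (hZmeas : ∀ S i j, Measurable (fun ω => Z S ω i j))
    (hZindep : ∀ S : ℕ, iIndepFun
      (fun (q : Fin (R S) × Fin (C S)) => fun ω => Z S ω q.1 q.2) (P S))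
    (hZbern : ∀ S i j, P S {ω | Z S ω i j = 1} = ENNReal.ofReal (p S i j)) :
    Tendsto (fun S : ℕ =>
        P S {ω | l2OpNorm (Z S ω) ≤ (Υ + 1) * S / Real.sqrt (R S * C S)})
      atTop (nhds 1) :=
  l2OpNorm_whp_bound_general ρ κ hρ hκ Υ hΥ R C hR hC p hp0 hp2 Ω mΩ P hP Z hZ01 hZmeas hZindep
    hZbern
end

section
/- Let R, C be positive integers, S > 0 a real number, and Υ ≥ 1. Suppose S/(RC) ≤ p_{ij} ≤ Υ·S/(RC) for all 1 ≤ i ≤ R, 1 ≤ j ≤ C, and let N̄_{i·} = Σ_{j=1}^C p_{ij} and N̄_{·j} = Σ_{i=1}^R p_{ij}. Then for all s, k ∈ {1,…,C}: Σ_{l=1}^R p_{ls} p_{lk} / N̄_{l·} ≥ N̄_{·s} N̄_{·k} / (Υ³ S). -/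
/-- **Lower bound on the kernel `P(s,k)`.**  If `S/(RC) ≤ p_{ij} ≤ Υ·S/(RC)`, then
`Σ_l p_{ls} p_{lk} / N̄_{l·} ≥ N̄_{·s} N̄_{·k} / (Υ³ S)` for all columns `s, k`. -/
theorem kernel_lower_bound
    (R C : ℕ) (hR : 0 < R) (hC : 0 < C) (S : ℝ) (hS : 0 < S)
    (Υ : ℝ) (hΥ : 1 ≤ Υ)
    (p : Fin R → Fin C → ℝ)
    (hp1 : ∀ i j, S / (R * C) ≤ p i j)
    (hp2 : ∀ i j, p i j ≤ Υ * S / (R * C))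
    (s k : Fin C) :
    (∑ i, p i s) * (∑ i, p i k) / (Υ ^ 3 * S)
      ≤ ∑ l, p l s * p l k / ∑ j, p l j := by
  have hRpos : (0:ℝ) < R := by exact_mod_cast hR
  have hCpos : (0:ℝ) < C := by exact_mod_cast hC
  have hΥpos : (0:ℝ) < Υ := lt_of_lt_of_le one_pos hΥ
  have hppos : ∀ i j, 0 < p i j := fun i j =>
    lt_of_lt_of_le (div_pos hS (by positivity)) (hp1 i j)
  set A := ∑ i, p i s with hA
  set B := ∑ i, p i k with hB
  have hApos : 0 < A := Finset.sum_pos (fun i _ => hppos i s) ⟨⟨0, hR⟩, Finset.mem_univ _⟩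
  have hBpos : 0 < B := Finset.sum_pos (fun i _ => hppos i k) ⟨⟨0, hR⟩, Finset.mem_univ _⟩
  -- column sum bound: B ≤ Υ S / C
  have hBle : B ≤ Υ * S / C := by
    calc B ≤ ∑ _i : Fin R, Υ * S / (R * C) :=
          Finset.sum_le_sum (fun i _ => hp2 i k)
      _ = R * (Υ * S / (R * C)) := by
          rw [Finset.sum_const, Finset.card_univ, Fintype.card_fin, nsmul_eq_mul]
      _ = Υ * S / C := by field_simp
  -- row sum bound: ∑_j p l j ≤ Υ S / R
  have hrow : ∀ l : Fin R, (∑ j, p l j) ≤ Υ * S / R := by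
    intro l
    calc (∑ j, p l j) ≤ ∑ _j : Fin C, Υ * S / (R * C) :=
          Finset.sum_le_sum (fun j _ => hp2 l j)
      _ = C * (Υ * S / (R * C)) := by
          rw [Finset.sum_const, Finset.card_univ, Fintype.card_fin, nsmul_eq_mul]
      _ = Υ * S / R := by field_simp
  have hrowpos : ∀ l : Fin R, 0 < ∑ j, p l j :=
    fun l => Finset.sum_pos (fun j _ => hppos l j) ⟨⟨0, hC⟩, Finset.mem_univ _⟩
  -- termwise: p l s * p l k / rowsum ≥ p l s * B / (Υ² S)
  have hterm : ∀ l : Fin R, p l s * B / (Υ^2 * S) ≤ p l s * p l k / ∑ j, p l j := by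
    intro l
    have hpk : B / (R * Υ) ≤ p l k := by
      calc B / (R * Υ) ≤ (Υ * S / C) / (R * Υ) := by
            apply div_le_div_of_nonneg_right hBle (mul_pos hRpos hΥpos).le
        _ = S / (R * C) := by field_simp
        _ ≤ p l k := hp1 l k
    calc p l s * B / (Υ^2 * S)
        = p l s * (B / (R * Υ)) / (Υ * S / R) := by field_simp
      _ ≤ p l s * p l k / (Υ * S / R) := by
          apply div_le_div_of_nonneg_right _ (div_pos (mul_pos hΥpos hS) hRpos).le
          exact mul_le_mul_of_nonneg_left hpk (hppos l s).le
      _ ≤ p l s * p l k / ∑ j, p l j := by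
          apply div_le_div_of_nonneg_left (mul_pos (hppos l s) (hppos l k)).le (hrowpos l) (hrow l)
  calc A * B / (Υ ^ 3 * S) ≤ A * B / (Υ ^ 2 * S) := by
        apply div_le_div_of_nonneg_left (mul_pos hApos hBpos).le (mul_pos (pow_pos hΥpos 2) hS)
        have h23 : Υ^2 ≤ Υ^3 := pow_le_pow_right₀ hΥ (by norm_num)
        nlinarith [hS]
    _ = ∑ l, p l s * B / (Υ^2 * S) := by
        rw [← Finset.sum_div, ← Finset.sum_mul]
    _ ≤ ∑ l, p l s * p l k / ∑ j, p l j := Finset.sum_le_sum (fun l _ => hterm l)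
end

section
/- Let R, C be positive integers, S > 0 a real number, and Υ ≥ 1. Suppose S/(RC) ≤ p_{ij} ≤ Υ·S/(RC) for all 1 ≤ i ≤ R, 1 ≤ j ≤ C, and let N̄_{i·} = Σ_{j=1}^C p_{ij}, N̄_{·j} = Σ_{i=1}^R p_{ij}, and S₀ = Σ_{i,j} p_{ij}. If u ∈ ℝ^C satisfies Σ_{s=1}^C u_s √N̄_{·s} = 0, then Σ_{s=1}^C Σ_{k=1}^C (u_s/√N̄_{·s})(u_k/√N̄_{·k}) · (S₀/R²) · (Σ_{l=1}^R p_{ls}/N̄_{l·}) · (Σ_{l=1}^R p_{lk}/N̄_{l·}) ≤ (Υ−1)² · Σ_{s=1}^C u_s². -/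
/-- **Upper bound on the rank-one quadratic form.**  If `S/(RC) ≤ p_{ij} ≤ Υ·S/(RC)`
and `u` is orthogonal to `√N̄_{·}`, then the rank-one quadratic form is at most
`(Υ−1)²·Σ_s u_s²`. -/
theorem rank_one_quadratic_form_upper_bound
    (R C : ℕ) (hR : 0 < R) (hC : 0 < C) (S : ℝ) (hS : 0 < S)
    (Υ : ℝ) (hΥ : 1 ≤ Υ)
    (p : Fin R → Fin C → ℝ)
    (hp1 : ∀ i j, S / (R * C) ≤ p i j)
    (hp2 : ∀ i j, p i j ≤ Υ * S / (R * C))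
    (u : Fin C → ℝ) (hu : ∑ s, u s * Real.sqrt (∑ i, p i s) = 0) :
    ∑ s, ∑ k,
        (u s / Real.sqrt (∑ i, p i s)) * (u k / Real.sqrt (∑ i, p i k))
          * ((∑ i, ∑ j, p i j) / (R : ℝ) ^ 2)
          * (∑ l, p l s / ∑ j, p l j) * (∑ l, p l k / ∑ j, p l j)
      ≤ (Υ - 1) ^ 2 * ∑ s, u s ^ 2 := by
  have hRpos : (0:ℝ) < R := Nat.cast_pos.mpr hR
  have hCpos : (0:ℝ) < C := Nat.cast_pos.mpr hC
  set m : ℝ := S / (R * C) with hm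
  have hm0 : 0 < m := div_pos hS (by positivity)
  have hΥ0 : 0 < Υ := lt_of_lt_of_le one_pos hΥ
  have hp1' : ∀ i j, m ≤ p i j := hp1
  have hp2' : ∀ i j, p i j ≤ Υ * m := by
    intro i j
    have := hp2 i j
    rwa [mul_div_assoc] at this
  set N : Fin C → ℝ := fun s => ∑ i, p i s with hNdef
  set Nl : Fin R → ℝ := fun l => ∑ j, p l j with hNldef
  set S0 : ℝ := ∑ i, ∑ j, p i j with hS0def
  have hNlo : ∀ s, (R:ℝ) * m ≤ N s := by
    intro s
    calc (R:ℝ) * m = ∑ _i : Fin R, m := by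
          simp [Finset.sum_const, mul_comm]
      _ ≤ N s := Finset.sum_le_sum fun i _ => hp1' i s
  have hNhi : ∀ s, N s ≤ (R:ℝ) * (Υ * m) := by
    intro s
    calc N s ≤ ∑ _i : Fin R, Υ * m := Finset.sum_le_sum fun i _ => hp2' i s
      _ = (R:ℝ) * (Υ * m) := by simp [Finset.sum_const, mul_comm]
  have hNpos : ∀ s, 0 < N s := fun s => lt_of_lt_of_le (by positivity) (hNlo s)
  have hNllo : ∀ l, (C:ℝ) * m ≤ Nl l := by
    intro l
    calc (C:ℝ) * m = ∑ _j : Fin C, m := by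
          simp [Finset.sum_const, mul_comm]
      _ ≤ Nl l := Finset.sum_le_sum fun j _ => hp1' l j
  have hNlhi : ∀ l, Nl l ≤ (C:ℝ) * (Υ * m) := by
    intro l
    calc Nl l ≤ ∑ _j : Fin C, Υ * m := Finset.sum_le_sum fun j _ => hp2' l j
      _ = (C:ℝ) * (Υ * m) := by simp [Finset.sum_const, mul_comm]
  have hNlpos : ∀ l, 0 < Nl l := fun l => lt_of_lt_of_le (by positivity) (hNllo l)
  have hS0lo : (R:ℝ) * ((C:ℝ) * m) ≤ S0 := by
    calc (R:ℝ) * ((C:ℝ) * m) = ∑ _i : Fin R, (C:ℝ) * m := by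
          simp [Finset.sum_const, mul_comm]
      _ ≤ S0 := Finset.sum_le_sum fun i _ => hNllo i
  have hS0hi : S0 ≤ (R:ℝ) * ((C:ℝ) * (Υ * m)) := by
    calc S0 ≤ ∑ _i : Fin R, (C:ℝ) * (Υ * m) :=
          Finset.sum_le_sum fun i _ => hNlhi i
      _ = (R:ℝ) * ((C:ℝ) * (Υ * m)) := by simp [Finset.sum_const, mul_comm]
  have hS0pos : 0 < S0 := lt_of_lt_of_le (by positivity) hS0lo
  set f : Fin C → ℝ := fun s => ∑ l, p l s / Nl l with hfdef
  set c : ℝ := (R:ℝ) / S0 with hcdef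
  set K : ℝ := (Υ - 1) / ((C:ℝ) * Υ * m) with hKdef
  have hK0 : 0 ≤ K := div_nonneg (by linarith) (by positivity)
  -- key pointwise bound on 1/Nl l - c
  have hkey : ∀ l, |1 / Nl l - c| ≤ K := by
    intro l
    have hc : c = 1 / (S0 / (R:ℝ)) := by
      rw [hcdef, one_div_div]
    have hSRlo : (C:ℝ) * m ≤ S0 / (R:ℝ) := (le_div_iff₀ hRpos).mpr (by
      calc (C:ℝ) * m * R = (R:ℝ) * ((C:ℝ) * m) := by ring
        _ ≤ S0 := hS0lo)
    have hSRhi : S0 / (R:ℝ) ≤ (C:ℝ) * (Υ * m) := (div_le_iff₀ hRpos).mpr (by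
      calc S0 ≤ (R:ℝ) * ((C:ℝ) * (Υ * m)) := hS0hi
        _ = (C:ℝ) * (Υ * m) * R := by ring)
    have ha : (0:ℝ) < (C:ℝ) * m := by positivity
    have hb : (0:ℝ) < (C:ℝ) * (Υ * m) := by positivity
    have hbound : 1 / ((C:ℝ) * m) - 1 / ((C:ℝ) * (Υ * m)) = K := by
      rw [hKdef]; field_simp
    rw [hc, abs_sub_le_iff]
    constructor
    · have h1 : 1 / Nl l ≤ 1 / ((C:ℝ) * m) := one_div_le_one_div_of_le ha (hNllo l)
      have h2 : 1 / ((C:ℝ) * (Υ * m)) ≤ 1 / (S0 / (R:ℝ)) :=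
        one_div_le_one_div_of_le (lt_of_lt_of_le ha hSRlo) hSRhi
      linarith
    · have h1 : 1 / (S0 / (R:ℝ)) ≤ 1 / ((C:ℝ) * m) :=
        one_div_le_one_div_of_le ha hSRlo
      have h2 : 1 / ((C:ℝ) * (Υ * m)) ≤ 1 / Nl l :=
        one_div_le_one_div_of_le (hNlpos l) (hNlhi l)
      linarith
  have hf : ∀ s, |f s - c * N s| ≤ N s * K := by
    intro s
    have heq : f s - c * N s = ∑ l, p l s * (1 / Nl l - c) := by
      simp only [hfdef, hNdef, mul_sub, Finset.sum_sub_distrib, mul_one_div,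
        Finset.mul_sum]
      congr 1
      exact Finset.sum_congr rfl fun l _ => mul_comm _ _
    rw [heq]
    calc |∑ l, p l s * (1 / Nl l - c)| ≤ ∑ l, |p l s * (1 / Nl l - c)| :=
          Finset.abs_sum_le_sum_abs _ _
      _ ≤ ∑ l, p l s * K := by
          apply Finset.sum_le_sum
          intro l _
          rw [abs_mul, abs_of_nonneg (le_trans hm0.le (hp1' l s))]
          exact mul_le_mul_of_nonneg_left (hkey l) (le_trans hm0.le (hp1' l s))
      _ = N s * K := by rw [hNdef, ← Finset.sum_mul]
  set w : Fin C → ℝ := fun s => (f s - c * N s) / Real.sqrt (N s) with hwdef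
  have hw2 : ∀ s, w s ^ 2 ≤ N s * K ^ 2 := by
    intro s
    have hNs := hNpos s
    have hsq : Real.sqrt (N s) ^ 2 = N s := Real.sq_sqrt hNs.le
    have : w s ^ 2 = (f s - c * N s) ^ 2 / N s := by
      rw [hwdef, div_pow, hsq]
    rw [this, div_le_iff₀ hNs]
    calc (f s - c * N s) ^ 2 = |f s - c * N s| ^ 2 := (sq_abs _).symm
      _ ≤ (N s * K) ^ 2 := by
          apply pow_le_pow_left₀ (abs_nonneg _) (hf s)
      _ = N s * K ^ 2 * N s := by ring
  have hsumw2 : ∑ s, w s ^ 2 ≤ S0 * K ^ 2 := by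
    calc ∑ s, w s ^ 2 ≤ ∑ s, N s * K ^ 2 := Finset.sum_le_sum fun s _ => hw2 s
      _ = (∑ s, N s) * K ^ 2 := by rw [Finset.sum_mul]
      _ = S0 * K ^ 2 := by
          rw [hS0def, Finset.sum_comm]
  -- T₀ rewrite
  have hT0 : ∑ s, (u s / Real.sqrt (N s)) * f s = ∑ s, u s * w s := by
    have : ∀ s : Fin C, u s * w s = (u s / Real.sqrt (N s)) * f s
        - c * (u s * Real.sqrt (N s)) := by
      intro s
      have hNs := hNpos s
      have hsqrt : 0 < Real.sqrt (N s) := Real.sqrt_pos.mpr hNs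
      have hws : w s = f s / Real.sqrt (N s) - c * Real.sqrt (N s) := by
        simp only [hwdef]
        rw [sub_div, mul_div_assoc, Real.div_sqrt]
      rw [hws]
      ring
    rw [Finset.sum_congr rfl (fun s _ => this s), Finset.sum_sub_distrib,
      ← Finset.mul_sum, hu, mul_zero, sub_zero]
  -- Cauchy–Schwarz
  have hCS : (∑ s, u s * w s) ^ 2 ≤ (∑ s, u s ^ 2) * ∑ s, w s ^ 2 :=
    Finset.sum_mul_sq_le_sq_mul_sq _ _ _
  -- rewrite LHS
  have hLHS : ∑ s, ∑ k,
        (u s / Real.sqrt (N s)) * (u k / Real.sqrt (N k))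
          * (S0 / (R : ℝ) ^ 2) * f s * f k
      = (S0 / (R:ℝ) ^ 2) * (∑ s, (u s / Real.sqrt (N s)) * f s) ^ 2 := by
    rw [pow_two (∑ s, (u s / Real.sqrt (N s)) * f s), Finset.sum_mul_sum, Finset.mul_sum]
    refine Finset.sum_congr rfl fun s _ => ?_
    rw [Finset.mul_sum]
    refine Finset.sum_congr rfl fun k _ => ?_
    ring
  have hu2 : (0:ℝ) ≤ ∑ s, u s ^ 2 := Finset.sum_nonneg fun s _ => sq_nonneg _
  calc ∑ s, ∑ k,
        (u s / Real.sqrt (N s)) * (u k / Real.sqrt (N k))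
          * (S0 / (R : ℝ) ^ 2) * f s * f k
      = (S0 / (R:ℝ) ^ 2) * (∑ s, u s * w s) ^ 2 := by rw [hLHS, hT0]
    _ ≤ (S0 / (R:ℝ) ^ 2) * ((∑ s, u s ^ 2) * (S0 * K ^ 2)) := by
        apply mul_le_mul_of_nonneg_left _ (by positivity)
        calc (∑ s, u s * w s) ^ 2 ≤ (∑ s, u s ^ 2) * ∑ s, w s ^ 2 := hCS
          _ ≤ (∑ s, u s ^ 2) * (S0 * K ^ 2) :=
              mul_le_mul_of_nonneg_left hsumw2 hu2
    _ = (S0 * K) ^ 2 / (R:ℝ) ^ 2 * ∑ s, u s ^ 2 := by ring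
    _ ≤ (Υ - 1) ^ 2 * ∑ s, u s ^ 2 := by
        apply mul_le_mul_of_nonneg_right _ hu2
        rw [div_le_iff₀ (by positivity)]
        have hSK : S0 * K ≤ (R:ℝ) * (Υ - 1) := by
          calc S0 * K ≤ (R:ℝ) * ((C:ℝ) * (Υ * m)) * K :=
                mul_le_mul_of_nonneg_right hS0hi hK0
            _ = (R:ℝ) * (Υ - 1) := by
                rw [hKdef]; field_simp
        have hSK0 : 0 ≤ S0 * K := mul_nonneg hS0pos.le hK0
        calc (S0 * K) ^ 2 ≤ ((R:ℝ) * (Υ - 1)) ^ 2 :=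
              pow_le_pow_left₀ hSK0 hSK 2
          _ = (Υ - 1) ^ 2 * (R:ℝ) ^ 2 := by ring
end

section
/- Let R, C be positive integers, S > 0 a real number, and Υ ≥ 1. Suppose S/(RC) ≤ p_{ij} ≤ Υ·S/(RC) for all 1 ≤ i ≤ R, 1 ≤ j ≤ C, let N̄_{i·} = Σ_{j=1}^C p_{ij} and N̄_{·j} = Σ_{i=1}^R p_{ij}, and set P(s,k) = Σ_{l=1}^R p_{ls} p_{lk} / N̄_{l·}. If u ∈ ℝ^C satisfies Σ_{s=1}^C u_s √N̄_{·s} = 0, then Σ_{s=1}^C u_s² − Σ_{s=1}^C Σ_{k=1}^C (u_s/√N̄_{·s})(u_k/√N̄_{·k}) P(s,k) ≥ (1/Υ³) Σ_{s=1}^C u_s²; equivalently, Σ_{s,k} (u_s/√N̄_{·s})(u_k/√N̄_{·k}) P(s,k) ≤ (1 − 1/Υ³) Σ_{s=1}^C u_s². -/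
open Finset

/-- Auxiliary spectral-gap lemma: if `A` is symmetric with row sums `M` and
pointwise lower bound `c * M s * M k`, then for `v` orthogonal to `M`, the
quadratic form is at most `∑ v s ^ 2 * (M s - c * M s * ∑ M)`. -/
lemma quad_gap_aux {ι : Type*} [Fintype ι] (A : ι → ι → ℝ) (M : ι → ℝ) (v : ι → ℝ) (c : ℝ)
    (hsym : ∀ s k, A s k = A k s)
    (hrow : ∀ s, ∑ k, A s k = M s)
    (hlb : ∀ s k, c * (M s * M k) ≤ A s k)
    (hv : ∑ s, v s * M s = 0) :
    ∑ s, ∑ k, v s * v k * A s k ≤ ∑ s, v s ^ 2 * (M s - c * (M s * ∑ k, M k)) := by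
  have hrowB : ∀ s, ∑ k, (A s k - c * (M s * M k)) = M s - c * (M s * ∑ k, M k) := by
    intro s
    rw [Finset.sum_sub_distrib, hrow]
    congr 1
    rw [Finset.mul_sum, Finset.mul_sum]
  have key : ∑ s, ∑ k, v s * v k * A s k
      = ∑ s, ∑ k, v s * v k * (A s k - c * (M s * M k)) := by
    have h2 : ∑ s, ∑ k, v s * v k * (c * (M s * M k))
        = c * ((∑ s, v s * M s) * (∑ k, v k * M k)) := by
      rw [Finset.sum_mul_sum, Finset.mul_sum]
      refine Finset.sum_congr rfl fun s _ => ?_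
      rw [Finset.mul_sum]
      refine Finset.sum_congr rfl fun k _ => ?_
      ring
    have h3 : ∑ s, ∑ k, v s * v k * A s k
        = ∑ s, ∑ k, (v s * v k * (A s k - c * (M s * M k)) + v s * v k * (c * (M s * M k))) := by
      refine Finset.sum_congr rfl fun s _ => Finset.sum_congr rfl fun k _ => ?_
      ring
    rw [h3]
    simp only [Finset.sum_add_distrib]
    rw [h2, hv, zero_mul, mul_zero, add_zero]
  have hdiag : ∑ s, ∑ k, v s ^ 2 * (A s k - c * (M s * M k))
      = ∑ s, v s ^ 2 * (M s - c * (M s * ∑ k, M k)) := by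
    refine Finset.sum_congr rfl fun s _ => ?_
    rw [← Finset.mul_sum, hrowB s]
  have hdiag2 : ∑ s, ∑ k, v k ^ 2 * (A s k - c * (M s * M k))
      = ∑ s, v s ^ 2 * (M s - c * (M s * ∑ k, M k)) := by
    rw [Finset.sum_comm]
    refine Finset.sum_congr rfl fun k _ => ?_
    rw [← Finset.mul_sum, ← hrowB k]
    congr 1
    refine Finset.sum_congr rfl fun s _ => ?_
    rw [hsym s k, mul_comm (M s) (M k)]
  have h2T : 2 * (∑ s, ∑ k, v s * v k * (A s k - c * (M s * M k)))
      ≤ ∑ s, ∑ k, v s ^ 2 * (A s k - c * (M s * M k))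
        + ∑ s, ∑ k, v k ^ 2 * (A s k - c * (M s * M k)) := by
    rw [Finset.mul_sum, ← Finset.sum_add_distrib]
    refine Finset.sum_le_sum fun s _ => ?_
    rw [Finset.mul_sum, ← Finset.sum_add_distrib]
    refine Finset.sum_le_sum fun k _ => ?_
    have hB : 0 ≤ A s k - c * (M s * M k) := sub_nonneg.2 (hlb s k)
    nlinarith [mul_nonneg hB (sq_nonneg (v s - v k))]
  rw [key]
  linarith [h2T, hdiag, hdiag2]

/-- **Spectral-gap bound for the kernel quadratic form.**  If
`S/(RC) ≤ p_{ij} ≤ Υ·S/(RC)`, `P(s,k) = Σ_l p_{ls} p_{lk}/N̄_{l·}`, and `u` is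
orthogonal to `√N̄_{·}`, then
`Σ_s u_s² − Σ_{s,k} (u_s/√N̄_{·s})(u_k/√N̄_{·k}) P(s,k) ≥ (1/Υ³) Σ_s u_s²`;
equivalently the quadratic form is at most `(1 − 1/Υ³) Σ_s u_s²`. -/
theorem kernel_quadratic_form_gap
    (R C : ℕ) (hR : 0 < R) (hC : 0 < C) (S : ℝ) (hS : 0 < S)
    (Υ : ℝ) (hΥ : 1 ≤ Υ)
    (p : Fin R → Fin C → ℝ)
    (hp1 : ∀ i j, S / (R * C) ≤ p i j)
    (hp2 : ∀ i j, p i j ≤ Υ * S / (R * C))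
    (u : Fin C → ℝ) (hu : ∑ s, u s * Real.sqrt (∑ i, p i s) = 0) :
    (1 / Υ ^ 3) * ∑ s, u s ^ 2
      ≤ ∑ s, u s ^ 2
          - ∑ s, ∑ k, (u s / Real.sqrt (∑ i, p i s)) * (u k / Real.sqrt (∑ i, p i k))
              * (∑ l, p l s * p l k / ∑ j, p l j) ∧
    ∑ s, ∑ k, (u s / Real.sqrt (∑ i, p i s)) * (u k / Real.sqrt (∑ i, p i k))
        * (∑ l, p l s * p l k / ∑ j, p l j)
      ≤ (1 - 1 / Υ ^ 3) * ∑ s, u s ^ 2 := by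
  have hRpos : (0:ℝ) < R := by exact_mod_cast hR
  have hCpos : (0:ℝ) < C := by exact_mod_cast hC
  have hΥ0 : (0:ℝ) < Υ := lt_of_lt_of_le one_pos hΥ
  have ha : (0:ℝ) < S / (R * C) := div_pos hS (by positivity)
  set a : ℝ := S / ((R:ℝ) * (C:ℝ)) with ha_def
  have hplb : ∀ l s, a ≤ p l s := fun l s => hp1 l s
  have hpub : ∀ l s, p l s ≤ Υ * a := by
    intro l s
    have h := hp2 l s
    rw [mul_div_assoc, ← ha_def] at h
    exact h
  have hp0 : ∀ l s, 0 < p l s := fun l s => lt_of_lt_of_le ha (hplb l s)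
  have hMlb : ∀ s : Fin C, (R:ℝ) * a ≤ ∑ i, p i s := by
    intro s
    calc (R:ℝ) * a = ∑ _i : Fin R, a := by
          rw [Finset.sum_const, Finset.card_univ, Fintype.card_fin, nsmul_eq_mul]
      _ ≤ ∑ i, p i s := Finset.sum_le_sum fun i _ => hplb i s
  have hMub : ∀ s : Fin C, ∑ i, p i s ≤ (R:ℝ) * (Υ * a) := by
    intro s
    calc ∑ i, p i s ≤ ∑ _i : Fin R, Υ * a := Finset.sum_le_sum fun i _ => hpub i s
      _ = (R:ℝ) * (Υ * a) := by
          rw [Finset.sum_const, Finset.card_univ, Fintype.card_fin, nsmul_eq_mul]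
  have hM0 : ∀ s : Fin C, (0:ℝ) < ∑ i, p i s := fun s => lt_of_lt_of_le (by positivity) (hMlb s)
  have hNrlb : ∀ l : Fin R, (C:ℝ) * a ≤ ∑ j, p l j := by
    intro l
    calc (C:ℝ) * a = ∑ _j : Fin C, a := by
          rw [Finset.sum_const, Finset.card_univ, Fintype.card_fin, nsmul_eq_mul]
      _ ≤ ∑ j, p l j := Finset.sum_le_sum fun j _ => hplb l j
  have hNrub : ∀ l : Fin R, ∑ j, p l j ≤ (C:ℝ) * (Υ * a) := by
    intro l
    calc ∑ j, p l j ≤ ∑ _j : Fin C, Υ * a := Finset.sum_le_sum fun j _ => hpub l j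
      _ = (C:ℝ) * (Υ * a) := by
          rw [Finset.sum_const, Finset.card_univ, Fintype.card_fin, nsmul_eq_mul]
  have hNr0 : ∀ l : Fin R, (0:ℝ) < ∑ j, p l j := fun l => lt_of_lt_of_le (by positivity) (hNrlb l)
  set Ntot : ℝ := ∑ l : Fin R, ∑ j, p l j with hNt_def
  have hNtlb : (R:ℝ) * ((C:ℝ) * a) ≤ Ntot := by
    rw [hNt_def]
    calc (R:ℝ) * ((C:ℝ) * a) = ∑ _l : Fin R, (C:ℝ) * a := by
          rw [Finset.sum_const, Finset.card_univ, Fintype.card_fin, nsmul_eq_mul]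
      _ ≤ ∑ l : Fin R, ∑ j, p l j := Finset.sum_le_sum fun l _ => hNrlb l
  have hNt0 : (0:ℝ) < Ntot := lt_of_lt_of_le (by positivity) hNtlb
  -- symmetry of the kernel
  have hsym : ∀ s k : Fin C, (∑ l, p l s * p l k / ∑ j, p l j) = ∑ l, p l k * p l s / ∑ j, p l j :=
    fun s k => Finset.sum_congr rfl fun l _ => by rw [mul_comm (p l s)]
  -- row sums of the kernel
  have hrow : ∀ s : Fin C, ∑ k, ∑ l, p l s * p l k / ∑ j, p l j = ∑ i, p i s := by
    intro s
    rw [Finset.sum_comm]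
    refine Finset.sum_congr rfl fun l _ => ?_
    rw [← Finset.sum_div, ← Finset.mul_sum, mul_div_assoc, div_self (hNr0 l).ne', mul_one]
  -- Doeblin-type minorization of the kernel
  have hlb : ∀ s k : Fin C,
      (1/(Υ^3*Ntot)) * ((∑ i, p i s) * (∑ i, p i k)) ≤ ∑ l, p l s * p l k / ∑ j, p l j := by
    intro s k
    calc (1/(Υ^3*Ntot)) * ((∑ i, p i s) * (∑ i, p i k))
        ≤ (1/(Υ^3*((R:ℝ)*((C:ℝ)*a)))) * (((R:ℝ)*(Υ*a)) * ((R:ℝ)*(Υ*a))) := by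
          apply mul_le_mul
          · apply one_div_le_one_div_of_le (by positivity)
            exact mul_le_mul_of_nonneg_left hNtlb (by positivity)
          · exact mul_le_mul (hMub s) (hMub k) (hM0 k).le (by positivity)
          · exact mul_nonneg (hM0 s).le (hM0 k).le
          · positivity
      _ = ∑ _l : Fin R, a * a / ((C:ℝ)*(Υ*a)) := by
          rw [Finset.sum_const, Finset.card_univ, Fintype.card_fin, nsmul_eq_mul]
          field_simp
      _ ≤ ∑ l, p l s * p l k / ∑ j, p l j := by
          refine Finset.sum_le_sum fun l _ => ?_
          exact div_le_div₀ (mul_nonneg (hp0 l s).le (hp0 l k).le)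
            (mul_le_mul (hplb l s) (hplb l k) ha.le (hp0 l s).le) (hNr0 l) (hNrub l)
  -- orthogonality in the rescaled variables
  have hv : ∑ s, (u s / Real.sqrt (∑ i, p i s)) * (∑ i, p i s) = 0 := by
    rw [← hu]
    refine Finset.sum_congr rfl fun s _ => ?_
    have h0 : (0:ℝ) < Real.sqrt (∑ i, p i s) := Real.sqrt_pos.mpr (hM0 s)
    rw [div_mul_eq_mul_div, div_eq_iff h0.ne', mul_assoc, Real.mul_self_sqrt (hM0 s).le]
  have main := quad_gap_aux (fun s k => ∑ l, p l s * p l k / ∑ j, p l j)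
      (fun s => ∑ i, p i s) (fun s => u s / Real.sqrt (∑ i, p i s)) (1/(Υ^3*Ntot))
      hsym hrow hlb hv
  beta_reduce at main
  have hswap : ∑ k : Fin C, ∑ i, p i k = Ntot := by
    rw [hNt_def]; exact Finset.sum_comm
  have hRHS : ∑ s, (u s / Real.sqrt (∑ i, p i s)) ^ 2
        * ((∑ i, p i s) - (1/(Υ^3*Ntot)) * ((∑ i, p i s) * ∑ k : Fin C, ∑ i, p i k))
      = (1 - 1 / Υ ^ 3) * ∑ s, u s ^ 2 := by
    rw [hswap,
      show (1 - 1 / Υ ^ 3) * ∑ s, u s ^ 2 = ∑ s, (1 - 1 / Υ ^ 3) * u s ^ 2 by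
        rw [Finset.mul_sum]]
    refine Finset.sum_congr rfl fun s _ => ?_
    rw [div_pow, Real.sq_sqrt (hM0 s).le]
    have h1 : (∑ i : Fin R, p i s) - 1 / (Υ ^ 3 * Ntot) * ((∑ i : Fin R, p i s) * Ntot)
        = (1 - 1 / Υ ^ 3) * (∑ i : Fin R, p i s) := by
      field_simp [hNt0.ne', hΥ0.ne']
    rw [h1]
    field_simp [(hM0 s).ne']
  rw [hRHS] at main
  refine ⟨?_, main⟩
  have hexp : (1 - 1 / Υ ^ 3) * ∑ s, u s ^ 2
      = (∑ s, u s ^ 2) - (1 / Υ ^ 3) * ∑ s, u s ^ 2 := by ring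
  linarith [main, hexp]
end
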